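/- Fix ω₁, ω₂ ∈ ℂ∖{0} with Im(ω₁/ω₂) > 0, set q = exp(πiω₁/ω₂), q̃ = exp(πiω₂/ω₁), let g > 0, write g^w := exp(w·ln g), and fix λ ∈ ℂ. Let 𝒮(z) = (∏_{m=0}^∞ (1 − q^{2m}·e^{2πiz/ω₂})) / (∏_{m=1}^∞ (1 − q̃^{−2m}·e^{2πiz/ω₁})), and define the dual (F-)Whittaker vector Φ̂¹(t) = e^{2πλt/(ω₁ω₂)} · 𝒮(it + (ω₁ + ω₂)/2 − (iω₁ω₂/(2π))·ln g)⁻¹. Then for every t ∈ ℂ at which 𝒮 is defined (denominator factors nonzero) and nonvanishing at the three arguments involved, Φ̂¹ satisfies the pair of dual difference equations: (1 + q⁻¹·g^{ω₁}·e^{−2πt/ω₂})·Φ̂¹(t + iω₁) = e^{2πiλ/ω₂}·Φ̂¹(t) and (1 + q̃⁻¹·g^{ω₂}·e^{−2πt/ω₁})·Φ̂¹(t + iω₂) = e^{2πiλ/ω₁}·Φ̂¹(t). -/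

import Mathlib

/-!
Write `e_ω(z) = exp(2πiz/ω)`. The numerator of `𝒮` is the `q`-Pochhammer symbol
`(e_{ω₂}(z); q²)_∞` and its denominator is `(e_{ω₁}(z - ω₂); q̃⁻²)_∞`. The shift `z ↦ z - ω₁`
fixes `e_{ω₁}` and divides `e_{ω₂}` by `q²`, so it peels the first factor off the numerator;
the shift `z ↦ z - ω₂` fixes `e_{ω₂}` and peels the first factor off the denominator. Hence
`𝒮(z - ωⱼ) = (1 - e_{ωₖ}(z - ωⱼ)) 𝒮(z)` for `{j, k} = {1, 2}` (the second one needs the peeled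
factor to be nonzero). The step `t ↦ t + iωⱼ` moves the argument of `Φ̂¹` by `-ωⱼ`, and at that
argument `-e_{ωₖ}(z - ωⱼ)` is exactly `q⁻¹ g^{ω₁} e^{-2πt/ω₂}`, resp. `q̃⁻¹ g^{ω₂} e^{-2πt/ω₁}`.
-/

/-- `qparam ω₁ ω₂ = exp(πi·ω₁/ω₂)`; then `q = qparam ω₁ ω₂` and
`q̃ = qparam ω₂ ω₁`. -/
noncomputable def qparam (ω₁ ω₂ : ℂ) : ℂ :=
  Complex.exp ((Real.pi : ℂ) * Complex.I * ω₁ / ω₂)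

/-- The function `𝒮(z) = ∏_{m≥0}(1 − q^{2m}·e^{2πiz/ω₂}) / ∏_{m≥1}(1 − q̃^{−2m}·e^{2πiz/ω₁})`. -/
noncomputable def Sfun (ω₁ ω₂ z : ℂ) : ℂ :=
  (∏' m : ℕ, (1 - qparam ω₁ ω₂ ^ (2 * m) *
      Complex.exp (2 * (Real.pi : ℂ) * Complex.I * z / ω₂))) /
  (∏' m : ℕ, (1 - qparam ω₂ ω₁ ^ (-(2 * ((m : ℤ) + 1))) *
      Complex.exp (2 * (Real.pi : ℂ) * Complex.I * z / ω₁)))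

/-- The numerator infinite product of `𝒮` at `z`. -/
noncomputable def SnumProd (ω₁ ω₂ z : ℂ) : ℂ :=
  ∏' m : ℕ, (1 - qparam ω₁ ω₂ ^ (2 * m) *
    Complex.exp (2 * (Real.pi : ℂ) * Complex.I * z / ω₂))

/-- `𝒮` is defined (all denominator factors nonzero) and nonvanishing at `z`. -/
def SDefinedNeZero (ω₁ ω₂ z : ℂ) : Prop :=
  (∀ m : ℕ, 1 ≤ m →
    1 - qparam ω₂ ω₁ ^ (-(2 * (m : ℤ))) *
      Complex.exp (2 * (Real.pi : ℂ) * Complex.I * z / ω₁) ≠ 0) ∧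
  SnumProd ω₁ ω₂ z ≠ 0

/-- The argument of `𝒮` in the dual Whittaker vector `Φ̂¹`:
`it + (ω₁ + ω₂)/2 − (iω₁ω₂/(2π))·ln g`. -/
noncomputable def phi1HatArg (ω₁ ω₂ : ℂ) (g : ℝ) (t : ℂ) : ℂ :=
  Complex.I * t + (ω₁ + ω₂) / 2
    - Complex.I * ω₁ * ω₂ / (2 * (Real.pi : ℂ)) * (Real.log g : ℂ)

/-- The dual (F-)Whittaker vector
`Φ̂¹(t) = e^{2πλt/(ω₁ω₂)}·𝒮(it + (ω₁ + ω₂)/2 − (iω₁ω₂/(2π))·ln g)⁻¹`. -/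
noncomputable def Phi1Hat (ω₁ ω₂ : ℂ) (g : ℝ) (lam t : ℂ) : ℂ :=
  Complex.exp (2 * (Real.pi : ℂ) * lam * t / (ω₁ * ω₂)) *
    (Sfun ω₁ ω₂ (phi1HatArg ω₁ ω₂ g t))⁻¹

open Complex
open scoped Real

noncomputable def qPochhammer (a b : ℂ) : ℂ :=
  ∏' m : ℕ, (1 - a * b ^ m)

lemma multipliable_one_sub_mul_pow (a : ℂ) {b : ℂ} (hb : ‖b‖ < 1) :
    Multipliable fun m : ℕ => 1 - a * b ^ m := by
  simp only [sub_eq_add_neg]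
  exact Complex.multipliable_one_add_of_summable
    ((summable_geometric_of_norm_lt_one hb).mul_left a).neg

lemma qPochhammer_eq_one_sub_mul (a : ℂ) {b : ℂ} (hb : ‖b‖ < 1) :
    qPochhammer a b = (1 - a) * qPochhammer (a * b) b := by
  have htail : Multipliable fun m : ℕ => 1 - a * b ^ (m + 1) := by
    simpa only [pow_succ', mul_assoc] using multipliable_one_sub_mul_pow (a * b) hb
  rw [qPochhammer, tprod_eq_zero_mul' (f := fun m => 1 - a * b ^ m) htail, pow_zero, mul_one,
    qPochhammer]
  simp only [pow_succ', mul_assoc]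

lemma exp_two_pi_I_mul_add_div (z w ω : ℂ) :
    exp (2 * π * I * (z + w) / ω) = exp (2 * π * I * z / ω) * exp (2 * π * I * w / ω) := by
  rw [← exp_add]; ring_nf

lemma exp_two_pi_I_mul_sub_div_self (z : ℂ) {ω : ℂ} (hω : ω ≠ 0) :
    exp (2 * π * I * (z - ω) / ω) = exp (2 * π * I * z / ω) := by
  rw [sub_eq_add_neg, exp_two_pi_I_mul_add_div, mul_neg, neg_div, mul_div_cancel_right₀ _ hω,
    exp_neg, exp_two_pi_mul_I, inv_one, mul_one]

lemma im_neg_div_pos {ω₁ ω₂ : ℂ} (him : 0 < (ω₁ / ω₂).im) : 0 < (-ω₂ / ω₁).im := by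
  have hne : ω₁ / ω₂ ≠ 0 := fun h => by simp [h] at him
  rw [neg_div, ← inv_div, neg_im, inv_im, neg_div, neg_neg]
  exact div_pos him (normSq_pos.mpr hne)

lemma left_ne_zero_of_im_div_pos {ω₁ ω₂ : ℂ} (him : 0 < (ω₁ / ω₂).im) : ω₁ ≠ 0 := by
  rintro rfl; simp at him

lemma right_ne_zero_of_im_div_pos {ω₁ ω₂ : ℂ} (him : 0 < (ω₁ / ω₂).im) : ω₂ ≠ 0 := by
  rintro rfl; simp at him

lemma norm_exp_two_pi_I_mul_div_lt_one {ω₁ ω₂ : ℂ} (him : 0 < (ω₁ / ω₂).im) :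
    ‖exp (2 * π * I * ω₁ / ω₂)‖ < 1 := by
  rw [norm_exp, Real.exp_lt_one_iff, mul_div_assoc, mul_comm _ (ω₁ / ω₂)]
  simpa using mul_pos him Real.two_pi_pos

lemma qparam_inv (ω₁ ω₂ : ℂ) : (qparam ω₂ ω₁)⁻¹ = qparam (-ω₂) ω₁ := by
  rw [qparam, qparam, ← exp_neg]; ring_nf

lemma qparam_sq (ω₁ ω₂ : ℂ) : qparam ω₁ ω₂ ^ 2 = exp (2 * π * I * ω₁ / ω₂) := by
  rw [qparam, ← exp_nat_mul]; ring_nf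

lemma qparam_zpow_neg_two_mul (ω₁ ω₂ : ℂ) (n : ℕ) :
    qparam ω₂ ω₁ ^ (-(2 * (n : ℤ))) = exp (2 * π * I * -ω₂ / ω₁) ^ n := by
  rw [zpow_neg, ← inv_zpow, show 2 * (n : ℤ) = ((2 * n : ℕ) : ℤ) by push_cast; ring,
    zpow_natCast, pow_mul, qparam_inv, qparam_sq]

lemma SnumProd_eq_qPochhammer (ω₁ ω₂ z : ℂ) :
    SnumProd ω₁ ω₂ z = qPochhammer (exp (2 * π * I * z / ω₂)) (exp (2 * π * I * ω₁ / ω₂)) := by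
  refine tprod_congr fun m => ?_
  rw [← qparam_sq ω₁, ← pow_mul, mul_comm]

lemma Sfun_eq_div_qPochhammer (ω₁ ω₂ z : ℂ) :
    Sfun ω₁ ω₂ z = SnumProd ω₁ ω₂ z /
      qPochhammer (exp (2 * π * I * (z - ω₂) / ω₁)) (exp (2 * π * I * -ω₂ / ω₁)) := by
  rw [Sfun, SnumProd, qPochhammer]
  congr 1
  refine tprod_congr fun m => ?_
  rw [← Nat.cast_add_one, qparam_zpow_neg_two_mul, sub_eq_add_neg z, exp_two_pi_I_mul_add_div,
    pow_succ]
  ring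

section Sfun

variable {ω₁ ω₂ : ℂ}

lemma SnumProd_sub_left (him : 0 < (ω₁ / ω₂).im) (z : ℂ) :
    SnumProd ω₁ ω₂ (z - ω₁) = (1 - exp (2 * π * I * (z - ω₁) / ω₂)) * SnumProd ω₁ ω₂ z := by
  rw [SnumProd_eq_qPochhammer, SnumProd_eq_qPochhammer,
    qPochhammer_eq_one_sub_mul _ (norm_exp_two_pi_I_mul_div_lt_one him),
    ← exp_two_pi_I_mul_add_div, sub_add_cancel]

lemma Sfun_sub_left (him : 0 < (ω₁ / ω₂).im) (z : ℂ) :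
    Sfun ω₁ ω₂ (z - ω₁) = (1 - exp (2 * π * I * (z - ω₁) / ω₂)) * Sfun ω₁ ω₂ z := by
  rw [Sfun_eq_div_qPochhammer, Sfun_eq_div_qPochhammer, SnumProd_sub_left him, mul_div_assoc,
    sub_right_comm, exp_two_pi_I_mul_sub_div_self _ (left_ne_zero_of_im_div_pos him)]

lemma Sfun_sub_right (him : 0 < (ω₁ / ω₂).im) {z : ℂ}
    (hz : 1 - exp (2 * π * I * (z - ω₂) / ω₁) ≠ 0) :
    Sfun ω₁ ω₂ (z - ω₂) = (1 - exp (2 * π * I * (z - ω₂) / ω₁)) * Sfun ω₁ ω₂ z := by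
  have hnum : SnumProd ω₁ ω₂ (z - ω₂) = SnumProd ω₁ ω₂ z := by
    simp only [SnumProd, exp_two_pi_I_mul_sub_div_self _ (right_ne_zero_of_im_div_pos him)]
  have hden := qPochhammer_eq_one_sub_mul (exp (2 * π * I * (z - ω₂) / ω₁))
    (norm_exp_two_pi_I_mul_div_lt_one (im_neg_div_pos him))
  rw [← exp_two_pi_I_mul_add_div, ← sub_eq_add_neg] at hden
  rw [Sfun_eq_div_qPochhammer, Sfun_eq_div_qPochhammer, hnum, hden, ← mul_div_assoc,
    mul_div_mul_left _ _ hz]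

end Sfun

lemma phi1HatArg_comm (ω₁ ω₂ : ℂ) (g : ℝ) (t : ℂ) :
    phi1HatArg ω₁ ω₂ g t = phi1HatArg ω₂ ω₁ g t := by
  unfold phi1HatArg; ring

lemma phi1HatArg_add_I_mul (ω₁ ω₂ : ℂ) (g : ℝ) (t ω : ℂ) :
    phi1HatArg ω₁ ω₂ g (t + I * ω) = phi1HatArg ω₁ ω₂ g t - ω := by
  unfold phi1HatArg; linear_combination ω * I_mul_I

lemma exp_phi1HatArg_sub_left {ω₁ ω₂ : ℂ} (hω₂ : ω₂ ≠ 0) (g : ℝ) (t : ℂ) :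
    exp (2 * π * I * (phi1HatArg ω₁ ω₂ g t - ω₁) / ω₂) =
      -((qparam ω₁ ω₂)⁻¹ * exp (ω₁ * Real.log g) * exp (-(2 * π * t / ω₂))) := by
  rw [qparam, ← exp_neg, ← exp_add, ← exp_add, ← neg_one_mul, ← exp_pi_mul_I, ← exp_add]
  congr 1
  unfold phi1HatArg
  field_simp
  linear_combination (2 * π * t - ω₁ * ω₂ * Real.log g) * I_mul_I

lemma mul_Phi1Hat_add_I_mul {ω₁ ω₂ c ω : ℂ} {g : ℝ} {lam t : ℂ} (hc : c ≠ 0)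
    (hS : Sfun ω₁ ω₂ (phi1HatArg ω₁ ω₂ g t - ω) = c * Sfun ω₁ ω₂ (phi1HatArg ω₁ ω₂ g t)) :
    c * Phi1Hat ω₁ ω₂ g lam (t + I * ω) =
      exp (2 * π * lam * (I * ω) / (ω₁ * ω₂)) * Phi1Hat ω₁ ω₂ g lam t := by
  rw [Phi1Hat, Phi1Hat, phi1HatArg_add_I_mul, hS, mul_add, add_div, exp_add, mul_inv]
  linear_combination (exp (2 * π * lam * (I * ω) / (ω₁ * ω₂)) *
    exp (2 * π * lam * t / (ω₁ * ω₂)) * (Sfun ω₁ ω₂ (phi1HatArg ω₁ ω₂ g t))⁻¹) *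
    mul_inv_cancel₀ hc

theorem whittaker_vector_Phi1Hat_difference_equations_general
    (ω₁ ω₂ : ℂ) (him : 0 < (ω₁ / ω₂).im)
    (g : ℝ) (lam t : ℂ)
    (h1 : SDefinedNeZero ω₁ ω₂ (phi1HatArg ω₁ ω₂ g t))
    (h2 : SDefinedNeZero ω₁ ω₂ (phi1HatArg ω₁ ω₂ g t - ω₁)) :
    (1 + (qparam ω₁ ω₂)⁻¹ * Complex.exp (ω₁ * (Real.log g : ℂ)) *
          Complex.exp (-(2 * (Real.pi : ℂ) * t / ω₂))) *
        Phi1Hat ω₁ ω₂ g lam (t + Complex.I * ω₁)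
      = Complex.exp (2 * (Real.pi : ℂ) * Complex.I * lam / ω₂) * Phi1Hat ω₁ ω₂ g lam t ∧
    (1 + (qparam ω₂ ω₁)⁻¹ * Complex.exp (ω₂ * (Real.log g : ℂ)) *
          Complex.exp (-(2 * (Real.pi : ℂ) * t / ω₁))) *
        Phi1Hat ω₁ ω₂ g lam (t + Complex.I * ω₂)
      = Complex.exp (2 * (Real.pi : ℂ) * Complex.I * lam / ω₁) * Phi1Hat ω₁ ω₂ g lam t := by
  have hω₁ := left_ne_zero_of_im_div_pos him
  have hω₂ := right_ne_zero_of_im_div_pos him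
  have hA : 1 - exp (2 * π * I * (phi1HatArg ω₁ ω₂ g t - ω₁) / ω₂) ≠ 0 :=
    left_ne_zero_of_mul (SnumProd_sub_left him _ ▸ h2.2)
  have hB : 1 - exp (2 * π * I * (phi1HatArg ω₁ ω₂ g t - ω₂) / ω₁) ≠ 0 := by
    have h := h1.1 1 le_rfl
    rwa [qparam_zpow_neg_two_mul, pow_one, mul_comm, ← exp_two_pi_I_mul_add_div,
      ← sub_eq_add_neg] at h
  constructor
  · rw [← sub_neg_eq_add, ← exp_phi1HatArg_sub_left hω₂,
      mul_Phi1Hat_add_I_mul hA (Sfun_sub_left him _)]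
    congr 2; field_simp
  · rw [← sub_neg_eq_add, ← exp_phi1HatArg_sub_left hω₁, ← phi1HatArg_comm ω₁ ω₂,
      mul_Phi1Hat_add_I_mul hB (Sfun_sub_right him hB)]
    congr 2; field_simp

/-- The dual Whittaker vector `Φ̂¹` satisfies the pair of dual difference equations
`(1 + q⁻¹·g^{ω₁}·e^{−2πt/ω₂})·Φ̂¹(t + iω₁) = e^{2πiλ/ω₂}·Φ̂¹(t)` and
`(1 + q̃⁻¹·g^{ω₂}·e^{−2πt/ω₁})·Φ̂¹(t + iω₂) = e^{2πiλ/ω₁}·Φ̂¹(t)`. -/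
theorem whittaker_vector_Phi1Hat_difference_equations
    (ω₁ ω₂ : ℂ) (hω₁ : ω₁ ≠ 0) (hω₂ : ω₂ ≠ 0) (him : 0 < (ω₁ / ω₂).im)
    (g : ℝ) (hg : 0 < g) (lam t : ℂ)
    (h1 : SDefinedNeZero ω₁ ω₂ (phi1HatArg ω₁ ω₂ g t))
    (h2 : SDefinedNeZero ω₁ ω₂ (phi1HatArg ω₁ ω₂ g t - ω₁))
    (h3 : SDefinedNeZero ω₁ ω₂ (phi1HatArg ω₁ ω₂ g t - ω₂)) :
    (1 + (qparam ω₁ ω₂)⁻¹ * Complex.exp (ω₁ * (Real.log g : ℂ)) *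
          Complex.exp (-(2 * (Real.pi : ℂ) * t / ω₂))) *
        Phi1Hat ω₁ ω₂ g lam (t + Complex.I * ω₁)
      = Complex.exp (2 * (Real.pi : ℂ) * Complex.I * lam / ω₂) * Phi1Hat ω₁ ω₂ g lam t ∧
    (1 + (qparam ω₂ ω₁)⁻¹ * Complex.exp (ω₂ * (Real.log g : ℂ)) *
          Complex.exp (-(2 * (Real.pi : ℂ) * t / ω₁))) *
        Phi1Hat ω₁ ω₂ g lam (t + Complex.I * ω₂)
      = Complex.exp (2 * (Real.pi : ℂ) * Complex.I * lam / ω₁) * Phi1Hat ω₁ ω₂ g lam t :=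
  whittaker_vector_Phi1Hat_difference_equations_general ω₁ ω₂ him g lam t h1 h2
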